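/- Let Ω ⊆ ℂ be open, let a, b be smooth real-valued functions and h a smooth positive real-valued function on Ω, with covariant derivatives ∇, ∇̄ and magnetic field B = h²(∂ₓb - ∂_y a). Let W be a smooth nonvanishing real-valued function on Ω and define ∇̃φ = ∇φ - (∂W/W)φ + 2(∂h/h)φ. Then for every smooth ψ : Ω → ℂ, 2h²(∇̃(∇̄ψ) - ∇̄(∇̃ψ)) = B̃ψ, where B̃ = B + (1/2)Δ_h(log|W|) - K, Δ_h = 4h²∂∂̄ is the Laplace–Beltrami operator and K = 4h²∂∂̄(log h) is the Gaussian curvature. That is, the Laplace transformation changes the magnetic field by B ↦ B + (1/2)Δ_h log|U - B| - K. -/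

import Mathlib

open Complex ComplexConjugate MeasureTheory

noncomputable section

/-- Partial derivative in the x-direction (identifying ℂ with ℝ²). -/
def pdx (f : ℂ → ℂ) (z : ℂ) : ℂ := fderiv ℝ f z 1

/-- Partial derivative in the y-direction. -/
def pdy (f : ℂ → ℂ) (z : ℂ) : ℂ := fderiv ℝ f z Complex.I

/-- Wirtinger derivative ∂ = (∂ₓ - i ∂_y)/2. -/
def wd (f : ℂ → ℂ) (z : ℂ) : ℂ := (pdx f z - Complex.I * pdy f z) / 2

/-- Wirtinger derivative ∂̄ = (∂ₓ + i ∂_y)/2. -/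
def wdb (f : ℂ → ℂ) (z : ℂ) : ℂ := (pdx f z + Complex.I * pdy f z) / 2

/-- x-derivative of a real-valued function. -/
def pdxR (f : ℂ → ℝ) (z : ℂ) : ℝ := fderiv ℝ f z 1

/-- y-derivative of a real-valued function. -/
def pdyR (f : ℂ → ℝ) (z : ℂ) : ℝ := fderiv ℝ f z Complex.I

/-- Magnetic field B = h²(∂ₓ b - ∂_y a). -/
def Bf (a b h : ℂ → ℝ) (z : ℂ) : ℝ := (h z)^2 * (pdxR b z - pdyR a z)

/-- Covariant derivative ∇ψ = ∂ψ - iAψ with A = (a - ib)/2. -/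
def cd (a b : ℂ → ℝ) (ψ : ℂ → ℂ) (z : ℂ) : ℂ :=
  wd ψ z - Complex.I * (((a z : ℂ) - Complex.I * (b z : ℂ)) / 2) * ψ z

/-- Covariant derivative ∇̄ψ = ∂̄ψ - iĀψ with Ā = (a + ib)/2. -/
def cdb (a b : ℂ → ℝ) (ψ : ℂ → ℂ) (z : ℂ) : ℂ :=
  wdb ψ z - Complex.I * (((a z : ℂ) + Complex.I * (b z : ℂ)) / 2) * ψ z

/-- Laplace–Beltrami operator Δ_h f = 4h²∂∂̄f of the metric (dx² + dy²)/h²,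
applied to a real-valued function. -/
def DeltaH (h f : ℂ → ℝ) (z : ℂ) : ℂ :=
  4 * (h z : ℂ)^2 * wd (wdb (fun w => (f w : ℂ))) z

/-- Gaussian curvature K = 4h²∂∂̄(log h) of the metric (dx² + dy²)/h². -/
def Kcurv (h : ℂ → ℝ) (z : ℂ) : ℂ :=
  4 * (h z : ℂ)^2 * wd (wdb (fun w => (Real.log (h w) : ℂ))) z
/-!
Write a covariant derivative pair as `∂ - α`, `∂̄ - β`. Since `∂` and `∂̄` commute on `C²`
functions, the commutator `[∂ - α, ∂̄ - β]` is multiplication by `∂̄α - ∂β`. For `∇, ∇̄` we have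
`α = iA`, `β = iĀ`, and `∂̄α - ∂β = (∂ₓb - ∂_y a)/2 = B/2h²`. Near a point where `W ≠ 0`, the
Laplace transform `∇̃` is `∂ - α̃` with `α̃ = iA + ∂ log|W| - 2 ∂ log h`, which adds
`∂̄∂(log|W| - 2 log h) = (½ Δ_h log|W| - K)/2h²` to the commutator.
-/

open Filter Topology ContinuousLinearMap

section Wirtinger

variable {f g : ℂ → ℂ} {z : ℂ}

theorem wd_sub (hf : DifferentiableAt ℝ f z) (hg : DifferentiableAt ℝ g z) :
    wd (fun w => f w - g w) z = wd f z - wd g z := by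
  simp only [wd, pdx, pdy, fderiv_fun_sub hf hg, sub_apply]; ring

theorem wdb_sub (hf : DifferentiableAt ℝ f z) (hg : DifferentiableAt ℝ g z) :
    wdb (fun w => f w - g w) z = wdb f z - wdb g z := by
  simp only [wdb, pdx, pdy, fderiv_fun_sub hf hg, sub_apply]; ring

theorem wdb_add (hf : DifferentiableAt ℝ f z) (hg : DifferentiableAt ℝ g z) :
    wdb (fun w => f w + g w) z = wdb f z + wdb g z := by
  simp only [wdb, pdx, pdy, fderiv_fun_add hf hg, add_apply]; ring

theorem wdb_const_mul (hf : DifferentiableAt ℝ f z) (c : ℂ) :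
    wdb (fun w => c * f w) z = c * wdb f z := by
  simp only [wdb, pdx, pdy, fderiv_const_mul hf, smul_apply, smul_eq_mul]; ring

theorem wd_mul (hf : DifferentiableAt ℝ f z) (hg : DifferentiableAt ℝ g z) :
    wd (fun w => f w * g w) z = wd f z * g z + f z * wd g z := by
  simp only [wd, pdx, pdy, fderiv_fun_mul hf hg, add_apply, smul_apply, smul_eq_mul]; ring

theorem wdb_mul (hf : DifferentiableAt ℝ f z) (hg : DifferentiableAt ℝ g z) :
    wdb (fun w => f w * g w) z = wdb f z * g z + f z * wdb g z := by
  simp only [wdb, pdx, pdy, fderiv_fun_mul hf hg, add_apply, smul_apply, smul_eq_mul]; ring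

theorem wdb_congr (h : f =ᶠ[𝓝 z] g) : wdb f z = wdb g z := by
  simp only [wdb, pdx, pdy, h.fderiv_eq]

theorem fderiv_ofReal_apply {u : ℂ → ℝ} (hu : DifferentiableAt ℝ u z) (v : ℂ) :
    fderiv ℝ (fun w => (u w : ℂ)) z v = fderiv ℝ u z v := by
  rw [show (fun w => (u w : ℂ)) = ofRealCLM ∘ u from rfl,
    (ofRealCLM.hasFDerivAt.comp z hu.hasFDerivAt).fderiv]
  simp

theorem wd_ofReal_log {u : ℂ → ℝ} (hu : DifferentiableAt ℝ u z) (h0 : u z ≠ 0) :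
    wd (fun w => (Real.log (u w) : ℂ)) z = wd (fun w => (u w : ℂ)) z / u z := by
  have hlog := hu.hasFDerivAt.log h0
  simp only [wd, pdx, pdy, fderiv_ofReal_apply hu, fderiv_ofReal_apply hlog.differentiableAt,
    hlog.fderiv, smul_apply, smul_eq_mul, ofReal_mul, ofReal_inv]
  ring

theorem ContDiffAt.ofReal_log {u : ℂ → ℝ} {n : WithTop ℕ∞} (hu : ContDiffAt ℝ n u z)
    (h0 : u z ≠ 0) : ContDiffAt ℝ n (fun w => (Real.log (u w) : ℂ)) z :=
  ofRealCLM.contDiff.contDiffAt.comp z (hu.log h0)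

theorem hasFDerivAt_fderiv_apply (hf : ContDiffAt ℝ 2 f z) (v : ℂ) :
    HasFDerivAt (fun w => fderiv ℝ f w v) ((fderiv ℝ (fderiv ℝ f) z).flip v) z := by
  have hd : DifferentiableAt ℝ (fderiv ℝ f) z :=
    (hf.fderiv_right (m := 1) (by norm_num)).differentiableAt one_ne_zero
  simpa using hd.hasFDerivAt.clm_apply (hasFDerivAt_const v z)

theorem hasFDerivAt_wd (hf : ContDiffAt ℝ 2 f z) :
    HasFDerivAt (wd f) ((2⁻¹ : ℂ) • ((fderiv ℝ (fderiv ℝ f) z).flip 1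
      - I • (fderiv ℝ (fderiv ℝ f) z).flip I)) z := by
  have hwd : wd f = fun w => (2⁻¹ : ℂ) * (fderiv ℝ f w 1 - I * fderiv ℝ f w I) := by
    ext w; simp only [wd, pdx, pdy]; ring
  rw [hwd]
  exact ((hasFDerivAt_fderiv_apply hf 1).fun_sub
    ((hasFDerivAt_fderiv_apply hf I).const_mul I)).const_mul 2⁻¹

theorem hasFDerivAt_wdb (hf : ContDiffAt ℝ 2 f z) :
    HasFDerivAt (wdb f) ((2⁻¹ : ℂ) • ((fderiv ℝ (fderiv ℝ f) z).flip 1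
      + I • (fderiv ℝ (fderiv ℝ f) z).flip I)) z := by
  have hwdb : wdb f = fun w => (2⁻¹ : ℂ) * (fderiv ℝ f w 1 + I * fderiv ℝ f w I) := by
    ext w; simp only [wdb, pdx, pdy]; ring
  rw [hwdb]
  exact ((hasFDerivAt_fderiv_apply hf 1).fun_add
    ((hasFDerivAt_fderiv_apply hf I).const_mul I)).const_mul 2⁻¹

theorem differentiableAt_wd (hf : ContDiffAt ℝ 2 f z) : DifferentiableAt ℝ (wd f) z :=
  (hasFDerivAt_wd hf).differentiableAt

theorem differentiableAt_wdb (hf : ContDiffAt ℝ 2 f z) : DifferentiableAt ℝ (wdb f) z :=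
  (hasFDerivAt_wdb hf).differentiableAt

theorem wd_wdb_comm (hf : ContDiffAt ℝ 2 f z) : wd (wdb f) z = wdb (wd f) z := by
  have hsymm := hf.isSymmSndFDerivAt (by simp) 1 I
  simp only [wd, wdb, pdx, pdy, (hasFDerivAt_wd hf).fderiv, (hasFDerivAt_wdb hf).fderiv,
    smul_apply, add_apply, sub_apply, flip_apply, smul_eq_mul, hsymm]
  ring

end Wirtinger

def covWd (α φ : ℂ → ℂ) (w : ℂ) : ℂ := wd φ w - α w * φ w

def covWdb (β φ : ℂ → ℂ) (w : ℂ) : ℂ := wdb φ w - β w * φ w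

theorem covWd_covWdb_sub_covWdb_covWd {α β ψ : ℂ → ℂ} {z : ℂ} (hα : DifferentiableAt ℝ α z)
    (hβ : DifferentiableAt ℝ β z) (hψ : ContDiffAt ℝ 2 ψ z) :
    covWd α (covWdb β ψ) z - covWdb β (covWd α ψ) z = (wdb α z - wd β z) * ψ z := by
  have dψ := hψ.differentiableAt two_ne_zero
  unfold covWd covWdb
  rw [wd_sub (differentiableAt_wdb hψ) (hβ.fun_mul dψ), wd_mul hβ dψ,
    wdb_sub (differentiableAt_wd hψ) (hα.fun_mul dψ), wdb_mul hα dψ, wd_wdb_comm hψ]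
  ring

theorem cdb_eq_covWdb (a b : ℂ → ℝ) :
    cdb a b = covWdb (fun w => I * (((a w : ℂ) + I * b w) / 2)) := rfl

theorem wdb_sub_wd_magneticPotential {a b : ℂ → ℝ} {z : ℂ} (ha : DifferentiableAt ℝ a z)
    (hb : DifferentiableAt ℝ b z) :
    wdb (fun w => I * (((a w : ℂ) - I * b w) / 2)) z
      - wd (fun w => I * (((a w : ℂ) + I * b w) / 2)) z = ((pdxR b z : ℂ) - pdyR a z) / 2 := by
  simp (disch := fun_prop) only [wd, wdb, pdx, pdy, div_eq_mul_inv, fderiv_const_mul,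
    fderiv_mul_const, fderiv_fun_sub, fderiv_fun_add, smul_apply, add_apply, sub_apply,
    smul_eq_mul, fderiv_ofReal_apply ha, fderiv_ofReal_apply hb]
  simp only [pdxR, pdyR]
  linear_combination ((fderiv ℝ a z I : ℂ) - fderiv ℝ b z 1) / 2 * I_mul_I

/-- the Laplace-transformed covariant derivatives ∇̃, ∇̄ with
∇̃φ = ∇φ - (∂W/W)φ + 2(∂h/h)φ have magnetic field B̃ = B + ½Δ_h(log|W|) - K;
i.e. the Laplace transformation changes B by B ↦ B + ½Δ_h log|U-B| - K. -/
theorem laplace_transformation_magnetic_field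
    (Ω : Set ℂ) (hΩ : IsOpen Ω) (a b h W : ℂ → ℝ)
    (ha : ContDiffOn ℝ (⊤ : ℕ∞) a Ω) (hb : ContDiffOn ℝ (⊤ : ℕ∞) b Ω)
    (hh : ContDiffOn ℝ (⊤ : ℕ∞) h Ω) (hWs : ContDiffOn ℝ (⊤ : ℕ∞) W Ω)
    (hhpos : ∀ z ∈ Ω, 0 < h z) (hW : ∀ z ∈ Ω, W z ≠ 0)
    (ψ : ℂ → ℂ) (hψ : ContDiffOn ℝ (⊤ : ℕ∞) ψ Ω) :
    let WC : ℂ → ℂ := fun w => ((W w : ℝ) : ℂ)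
    let hC : ℂ → ℂ := fun w => ((h w : ℝ) : ℂ)
    let tcd : (ℂ → ℂ) → ℂ → ℂ := fun φ w =>
      cd a b φ w - (wd WC w / WC w) * φ w + 2 * (wd hC w / hC w) * φ w
    ∀ z ∈ Ω,
      2 * (h z : ℂ)^2 * (tcd (fun w => cdb a b ψ w) z - cdb a b (fun w => tcd ψ w) z)
        = ((Bf a b h z : ℂ)
            + (1 / 2) * DeltaH h (fun w => Real.log |W w|) z
            - Kcurv h z) * ψ z := by
  intro WC hC tcd z hz
  have smooth : ∀ {F : Type} [NormedAddCommGroup F] [NormedSpace ℝ F] {f : ℂ → F},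
      ContDiffOn ℝ (⊤ : ℕ∞) f Ω → ∀ w ∈ Ω, ContDiffAt ℝ 2 f w := fun hf w hw =>
    (hf.contDiffAt (hΩ.mem_nhds hw)).of_le (WithTop.coe_le_coe.2 le_top)
  set α : ℂ → ℂ := fun w => I * (((a w : ℂ) - I * b w) / 2)
  set LW : ℂ → ℂ := fun w => (Real.log (W w) : ℂ)
  set Lh : ℂ → ℂ := fun w => (Real.log (h w) : ℂ)
  have cLW : ContDiffAt ℝ 2 LW z := (smooth hWs z hz).ofReal_log (hW z hz)
  have cLh : ContDiffAt ℝ 2 Lh z := (smooth hh z hz).ofReal_log (hhpos z hz).ne'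
  have htcd : tcd = covWd (fun w => α w + wd WC w / WC w - 2 * (wd hC w / hC w)) := by
    funext φ w; simp only [tcd, cd, covWd, α]; ring
  have hα' : (fun w => α w + wd WC w / WC w - 2 * (wd hC w / hC w))
      =ᶠ[𝓝 z] fun w => α w + wd LW w - 2 * wd Lh w := by
    filter_upwards [hΩ.mem_nhds hz] with w hw
    rw [wd_ofReal_log ((smooth hWs w hw).differentiableAt two_ne_zero) (hW w hw),
      wd_ofReal_log ((smooth hh w hw).differentiableAt two_ne_zero) (hhpos w hw).ne']
  have da := (smooth ha z hz).differentiableAt two_ne_zero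
  have db := (smooth hb z hz).differentiableAt two_ne_zero
  have dα : DifferentiableAt ℝ α z := by fun_prop
  have dwdLW := differentiableAt_wd cLW
  have dwdLh := differentiableAt_wd cLh
  have dα' : DifferentiableAt ℝ (fun w => α w + wd LW w - 2 * wd Lh w) z := by fun_prop
  rw [htcd, cdb_eq_covWdb,
    covWd_covWdb_sub_covWdb_covWd (dα'.congr_of_eventuallyEq hα') (by fun_prop) (smooth hψ z hz),
    wdb_congr hα', wdb_sub (dα.fun_add dwdLW) (dwdLh.const_mul 2), wdb_add dα dwdLW,
    wdb_const_mul dwdLh, ← wd_wdb_comm cLW, ← wd_wdb_comm cLh]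
  simp only [Bf, DeltaH, Kcurv, Real.log_abs]
  push_cast
  linear_combination 2 * (h z : ℂ) ^ 2 * ψ z * wdb_sub_wd_magneticPotential da db
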